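/- Fix β with 0 < β < 1/2. The function f(x) = x(1+x²)^{-1/2}·log(1+(1+x²)^{(1-2β)/2}) − (1−2β)·sgnlog(x) is continuous on ℝ and tends to 0 as x → ±∞; i.e., f ∈ C₀(ℝ). -/

import Mathlib

noncomputable def sgnlog (x : ℝ) : ℝ := Real.sign x * Real.log (1 + |x|)

/-! The difference is odd, so only `x → +∞` matters. There, with `A = 1 - 2β`, `t = 1 + x²` and
`q = x / √t → 1`, it splits as
`q (log (1 + t^(A/2)) - (A/2) log t) + (A/2) (q - 1) log t + (A/2) (log t - 2 log (1 + x))`.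
The first bracket equals `log (1 + t^(-A/2)) → 0`; the second is `O(log t / t)` because
`|q - 1| ≤ 1 - q² = 1 / t`; the third is
`(log (1 + x²) - 2 log x) - 2 (log (1 + x) - log x)`, two more brackets of the first kind. -/

open Real Filter Topology

lemma Real.abs_sign_le_one (x : ℝ) : |Real.sign x| ≤ 1 := by
  rcases Real.sign_apply_eq x with h | h | h <;> simp [h]

lemma Real.continuousAt_sign_of_ne_zero {x : ℝ} (hx : x ≠ 0) : ContinuousAt Real.sign x := by
  rcases hx.lt_or_gt with hx | hx
  · refine Filter.EventuallyEq.continuousAt (y := -1) ?_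
    filter_upwards [eventually_lt_nhds hx] with y hy using Real.sign_of_neg hy
  · refine Filter.EventuallyEq.continuousAt (y := 1) ?_
    filter_upwards [eventually_gt_nhds hx] with y hy using Real.sign_of_pos hy

lemma Continuous.real_sign_mul {g : ℝ → ℝ} (hg : Continuous g) (hg0 : g 0 = 0) :
    Continuous fun x => Real.sign x * g x := by
  refine continuous_iff_continuousAt.2 fun x => ?_
  rcases eq_or_ne x 0 with rfl | hx
  · have hbdd : IsBoundedUnder (· ≤ ·) (𝓝 0) ((‖·‖) ∘ Real.sign) :=
      isBoundedUnder_of ⟨1, fun y => by simpa using Real.abs_sign_le_one y⟩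
    have hlim : Tendsto g (𝓝 0) (𝓝 0) := by simpa only [hg0] using hg.tendsto 0
    simpa [ContinuousAt, hg0] using isBoundedUnder_le_mul_tendsto_zero hbdd hlim
  · exact (Real.continuousAt_sign_of_ne_zero hx).mul hg.continuousAt

@[fun_prop]
lemma continuous_sgnlog : Continuous sgnlog :=
  Continuous.real_sign_mul (by fun_prop (disch := intro x; positivity)) (by simp)

lemma sgnlog_neg (x : ℝ) : sgnlog (-x) = -sgnlog x := by
  simp [sgnlog, Real.sign_neg]

lemma sgnlog_of_pos {x : ℝ} (hx : 0 < x) : sgnlog x = log (1 + x) := by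
  simp [sgnlog, Real.sign_of_pos hx, abs_of_pos hx]

lemma Function.Odd.tendsto_cocompact_of_tendsto_atTop {E : Type*} [AddCommGroup E]
    [TopologicalSpace E] [IsTopologicalAddGroup E] {f : ℝ → E} (hf : f.Odd)
    (h : Tendsto f atTop (𝓝 0)) : Tendsto f (cocompact ℝ) (𝓝 0) := by
  rw [cocompact_eq_atBot_atTop]
  refine tendsto_sup.2 ⟨?_, h⟩
  simpa [Function.comp_def, hf _] using (h.comp tendsto_neg_atBot_atTop).neg

lemma tendsto_one_add_sq_atTop : Tendsto (fun x : ℝ => 1 + x ^ 2) atTop atTop :=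
  tendsto_atTop_add_const_left _ 1 (tendsto_pow_atTop two_ne_zero)

lemma tendsto_log_one_add_rpow_sub_mul_log {a : ℝ} (ha : 0 < a) :
    Tendsto (fun t => log (1 + t ^ a) - a * log t) atTop (𝓝 0) := by
  have hlim : Tendsto (fun t => log (1 + t ^ (-a))) atTop (𝓝 0) := by
    simpa [Function.comp_def] using ((continuousAt_log (by norm_num : (1 : ℝ) + 0 ≠ 0)).tendsto.comp
      ((tendsto_rpow_neg_atTop ha).const_add 1))
  refine hlim.congr' ?_
  filter_upwards [eventually_gt_atTop 0] with t ht
  have hta : 0 < t ^ a := rpow_pos_of_pos ht a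
  rw [← log_rpow ht, ← log_div (by positivity) hta.ne', rpow_neg ht.le]
  congr 1
  field_simp
  ring

lemma tendsto_log_one_add_sq_sub_two_mul_log_one_add :
    Tendsto (fun x => log (1 + x ^ 2) - 2 * log (1 + x)) atTop (𝓝 0) := by
  have h2 := tendsto_log_one_add_rpow_sub_mul_log two_pos
  have h1 := tendsto_log_one_add_rpow_sub_mul_log one_pos
  simp only [rpow_two, rpow_one, one_mul] at h1 h2
  simpa using (h2.sub (h1.const_mul 2)).congr fun x => by ring

lemma abs_div_sqrt_one_add_sq_sub_one_le {x : ℝ} (hx : 0 ≤ x) :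
    |x / √(1 + x ^ 2) - 1| ≤ (1 + x ^ 2)⁻¹ := by
  have hs : 0 < √(1 + x ^ 2) := sqrt_pos.2 (by positivity)
  have hq0 : 0 ≤ x / √(1 + x ^ 2) := div_nonneg hx hs.le
  have hq1 : x / √(1 + x ^ 2) ≤ 1 := (div_le_one hs).2 (le_sqrt_of_sq_le (by linarith))
  have hq2 : 1 - (x / √(1 + x ^ 2)) ^ 2 = (1 + x ^ 2)⁻¹ := by
    rw [div_pow, sq_sqrt (by positivity)]
    field_simp
    ring
  rw [abs_sub_comm, abs_of_nonneg (sub_nonneg.2 hq1), ← hq2]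
  nlinarith

lemma tendsto_div_sqrt_one_add_sq_atTop : Tendsto (fun x => x / √(1 + x ^ 2)) atTop (𝓝 1) := by
  rw [tendsto_iff_norm_sub_tendsto_zero]
  refine squeeze_zero' (by simp) ?_ (tendsto_inv_atTop_zero.comp tendsto_one_add_sq_atTop)
  filter_upwards [eventually_ge_atTop 0] with x hx
  exact abs_div_sqrt_one_add_sq_sub_one_le hx

lemma tendsto_div_sqrt_one_add_sq_sub_one_mul_log :
    Tendsto (fun x => (x / √(1 + x ^ 2) - 1) * log (1 + x ^ 2)) atTop (𝓝 0) := by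
  have hlog : Tendsto (fun t => log t / t) atTop (𝓝 0) :=
    isLittleO_log_id_atTop.tendsto_div_nhds_zero
  refine squeeze_zero_norm' ?_ (hlog.comp tendsto_one_add_sq_atTop)
  filter_upwards [eventually_ge_atTop 0] with x hx
  have hlog0 : 0 ≤ log (1 + x ^ 2) := log_nonneg (by nlinarith)
  rw [norm_mul, norm_of_nonneg hlog0, Function.comp_apply, Real.norm_eq_abs,
    ← inv_mul_eq_div (1 + x ^ 2)]
  exact mul_le_mul_of_nonneg_right (abs_div_sqrt_one_add_sq_sub_one_le hx) hlog0

/-- `A` plays the role of `1 - 2β`. -/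
noncomputable def logTransformDiff (A x : ℝ) : ℝ :=
  x / √(1 + x ^ 2) * log (1 + (1 + x ^ 2) ^ (A / 2)) - A * sgnlog x

lemma logTransformDiff_odd (A : ℝ) : (logTransformDiff A).Odd := fun x => by
  simp only [logTransformDiff, sgnlog_neg, neg_sq]
  ring

lemma continuous_logTransformDiff (A : ℝ) : Continuous (logTransformDiff A) := by
  have hpow : Continuous fun x : ℝ => (1 + x ^ 2) ^ (A / 2) :=
    (by fun_prop : Continuous fun x : ℝ => 1 + x ^ 2).rpow_const fun x => Or.inl (by positivity)
  unfold logTransformDiff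
  fun_prop (disch := intro x; positivity)

lemma logTransformDiff_eq_of_pos (A : ℝ) {x : ℝ} (hx : 0 < x) :
    logTransformDiff A x =
      x / √(1 + x ^ 2) * (log (1 + (1 + x ^ 2) ^ (A / 2)) - A / 2 * log (1 + x ^ 2))
        + A / 2 * ((x / √(1 + x ^ 2) - 1) * log (1 + x ^ 2))
        + A / 2 * (log (1 + x ^ 2) - 2 * log (1 + x)) := by
  rw [logTransformDiff, sgnlog_of_pos hx]
  ring

lemma tendsto_logTransformDiff_atTop {A : ℝ} (hA : 0 < A) :
    Tendsto (logTransformDiff A) atTop (𝓝 0) := by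
  have hlim := ((tendsto_div_sqrt_one_add_sq_atTop.mul
      ((tendsto_log_one_add_rpow_sub_mul_log (half_pos hA)).comp tendsto_one_add_sq_atTop)).add
    (tendsto_div_sqrt_one_add_sq_sub_one_mul_log.const_mul (A / 2))).add
    (tendsto_log_one_add_sq_sub_two_mul_log_one_add.const_mul (A / 2))
  simp only [mul_zero, add_zero] at hlim
  refine hlim.congr' ?_
  filter_upwards [eventually_gt_atTop 0] with x hx
  exact (logTransformDiff_eq_of_pos A hx).symm

lemma tendsto_logTransformDiff_cocompact {A : ℝ} (hA : 0 < A) :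
    Tendsto (logTransformDiff A) (cocompact ℝ) (𝓝 0) :=
  (logTransformDiff_odd A).tendsto_cocompact_of_tendsto_atTop (tendsto_logTransformDiff_atTop hA)

theorem beta_log_transform_diff_c0_general (β : ℝ) (hβ : β < 1 / 2) :
    Continuous (fun x : ℝ =>
      x / Real.sqrt (1 + x ^ 2) * Real.log (1 + (1 + x ^ 2) ^ ((1 - 2 * β) / 2))
        - (1 - 2 * β) * sgnlog x) ∧
    Filter.Tendsto (fun x : ℝ =>
      x / Real.sqrt (1 + x ^ 2) * Real.log (1 + (1 + x ^ 2) ^ ((1 - 2 * β) / 2))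
        - (1 - 2 * β) * sgnlog x)
      (Filter.cocompact ℝ) (nhds 0) :=
  ⟨continuous_logTransformDiff _, tendsto_logTransformDiff_cocompact (by linarith)⟩

theorem beta_log_transform_diff_c0 (β : ℝ) (hβ0 : 0 < β) (hβ : β < 1 / 2) :
    Continuous (fun x : ℝ =>
      x / Real.sqrt (1 + x ^ 2) * Real.log (1 + (1 + x ^ 2) ^ ((1 - 2 * β) / 2))
        - (1 - 2 * β) * sgnlog x) ∧
    Filter.Tendsto (fun x : ℝ =>
      x / Real.sqrt (1 + x ^ 2) * Real.log (1 + (1 + x ^ 2) ^ ((1 - 2 * β) / 2))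
        - (1 - 2 * β) * sgnlog x)
      (Filter.cocompact ℝ) (nhds 0) :=
  beta_log_transform_diff_c0_general β hβ
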